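/- arXiv:1701.03065 — 10 statements merged into one kernel-verified Lean document; each statement's English description precedes it below -/
import Mathlib

section
/- Let L > 0, ω̃ > 0, ω₀ > 0 and ζ₁, ζ₂ be real numbers. Define the inner-loop controller K_c(s) = L·ω̃·(s² + 2ζ₁ω₀s + ω₀²)/(s² + 2ζ₂ω₀s + ω₀² + 2(ζ₂ − ζ₁)ω₀ω̃) and the shaped plant G̃_c(s) = (ω̃/(s + ω̃))·((s² + 2ζ₁ω₀s + ω₀²)/(s² + 2ζ₂ω₀s + ω₀²)). Then for every complex number s such that s + ω̃ ≠ 0, s² + 2ζ₂ω₀s + ω₀² ≠ 0 and s² + 2ζ₂ω₀s + ω₀² + 2(ζ₂ − ζ₁)ω₀ω̃ ≠ 0, the unity-feedback interconnection of K_c with the inductor plant 1/(Ls) equals the shaped plant, i.e. K_c(s)/(L·s + K_c(s)) = G̃_c(s). -/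
/-- The unity-feedback interconnection of the inner controller `K_c` with the
inductor plant `1/(L s)` equals the shaped inner plant `G̃_c`. -/
theorem inner_loop_shaping (L ωt ω₀ ζ₁ ζ₂ : ℝ) (hL : 0 < L) (hωt : 0 < ωt) (hω₀ : 0 < ω₀)
    (s : ℂ)
    (h1 : s + (ωt : ℂ) ≠ 0)
    (h2 : s ^ 2 + 2 * (ζ₂ : ℂ) * (ω₀ : ℂ) * s + (ω₀ : ℂ) ^ 2 ≠ 0)
    (h3 : s ^ 2 + 2 * (ζ₂ : ℂ) * (ω₀ : ℂ) * s + (ω₀ : ℂ) ^ 2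
        + 2 * ((ζ₂ : ℂ) - (ζ₁ : ℂ)) * (ω₀ : ℂ) * (ωt : ℂ) ≠ 0) :
    ((L : ℂ) * (ωt : ℂ) * ((s ^ 2 + 2 * (ζ₁ : ℂ) * (ω₀ : ℂ) * s + (ω₀ : ℂ) ^ 2) /
        (s ^ 2 + 2 * (ζ₂ : ℂ) * (ω₀ : ℂ) * s + (ω₀ : ℂ) ^ 2
          + 2 * ((ζ₂ : ℂ) - (ζ₁ : ℂ)) * (ω₀ : ℂ) * (ωt : ℂ)))) /
      ((L : ℂ) * s + (L : ℂ) * (ωt : ℂ) * ((s ^ 2 + 2 * (ζ₁ : ℂ) * (ω₀ : ℂ) * s + (ω₀ : ℂ) ^ 2) /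
        (s ^ 2 + 2 * (ζ₂ : ℂ) * (ω₀ : ℂ) * s + (ω₀ : ℂ) ^ 2
          + 2 * ((ζ₂ : ℂ) - (ζ₁ : ℂ)) * (ω₀ : ℂ) * (ωt : ℂ))))
    = ((ωt : ℂ) / (s + (ωt : ℂ))) * ((s ^ 2 + 2 * (ζ₁ : ℂ) * (ω₀ : ℂ) * s + (ω₀ : ℂ) ^ 2) /
        (s ^ 2 + 2 * (ζ₂ : ℂ) * (ω₀ : ℂ) * s + (ω₀ : ℂ) ^ 2)) := by
  have hL' : (L:ℂ) ≠ 0 := by exact_mod_cast hL.ne'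
  have hden : (L : ℂ) * s + (L : ℂ) * (ωt : ℂ) * ((s ^ 2 + 2 * (ζ₁ : ℂ) * (ω₀ : ℂ) * s + (ω₀ : ℂ) ^ 2) /
        (s ^ 2 + 2 * (ζ₂ : ℂ) * (ω₀ : ℂ) * s + (ω₀ : ℂ) ^ 2
          + 2 * ((ζ₂ : ℂ) - (ζ₁ : ℂ)) * (ω₀ : ℂ) * (ωt : ℂ)))
      = ((L : ℂ) * (s + ωt) * (s ^ 2 + 2 * (ζ₂ : ℂ) * (ω₀ : ℂ) * s + (ω₀ : ℂ) ^ 2)) /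
        (s ^ 2 + 2 * (ζ₂ : ℂ) * (ω₀ : ℂ) * s + (ω₀ : ℂ) ^ 2
          + 2 * ((ζ₂ : ℂ) - (ζ₁ : ℂ)) * (ω₀ : ℂ) * (ωt : ℂ)) := by
    rw [eq_div_iff h3, add_mul, mul_assoc _ (_ / _), div_mul_cancel₀ _ h3]
    ring
  rw [hden, mul_div_assoc, div_div_div_cancel_right₀ h3]
  field_simp
end

section
/- Assume the single-converter closed-loop equations hold and that Δ := 1 + D′G̃_cK_r + D′G̃_cG_v(K_v + ηK_r) ≠ 0. Then the DC-link voltage is given by V = [D′G̃_cG_v(K_v + ηK_r)/Δ]·V_ref + [D′G̃_cG_vK_r/Δ]·(i_ref − i_load) − [G_v/Δ]·i_load. -/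
/-- Closed-loop expression for the DC-link voltage of the single converter. -/
theorem single_converter_voltage (D' η Gv Gc Kv Kr Vref iref iload V e₁ e₂ : ℂ)
    (he₁ : e₁ = Vref - V)
    (he₂ : e₂ = iref + η * e₁ - D' * Gc * (Kv * e₁ + Kr * e₂))
    (hV : V = Gv * (-iload + D' * Gc * (Kv * e₁ + Kr * e₂)))
    (hΔ : 1 + D' * Gc * Kr + D' * Gc * Gv * (Kv + η * Kr) ≠ 0) :
    V = (D' * Gc * Gv * (Kv + η * Kr) / (1 + D' * Gc * Kr + D' * Gc * Gv * (Kv + η * Kr))) * Vref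
      + (D' * Gc * Gv * Kr / (1 + D' * Gc * Kr + D' * Gc * Gv * (Kv + η * Kr))) * (iref - iload)
      - (Gv / (1 + D' * Gc * Kr + D' * Gc * Gv * (Kv + η * Kr))) * iload := by
  subst he₁
  have key : (1 + D' * Gc * Kr + D' * Gc * Gv * (Kv + η * Kr)) * V
      = D' * Gc * Gv * (Kv + η * Kr) * Vref + D' * Gc * Gv * Kr * (iref - iload)
        - Gv * iload := by
    linear_combination (1 + D' * Gc * Kr) * hV + D' * Gc * Kr * Gv * he₂
  field_simp
  linear_combination key
end

section
/- Assume the single-converter closed-loop equations hold and that Δ := 1 + D′G̃_cK_r + D′G̃_cG_v(K_v + ηK_r) ≠ 0. Then the voltage tracking error satisfies e₁ = [(1 + D′G̃_cK_r)/Δ]·V_ref − [D′G̃_cG_vK_r/Δ]·(i_ref − i_load) + [G_v/Δ]·i_load. -/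
/-- Closed-loop expression for the voltage tracking error of the single converter. -/
theorem single_converter_error (D' η Gv Gc Kv Kr Vref iref iload V e₁ e₂ : ℂ)
    (he₁ : e₁ = Vref - V)
    (he₂ : e₂ = iref + η * e₁ - D' * Gc * (Kv * e₁ + Kr * e₂))
    (hV : V = Gv * (-iload + D' * Gc * (Kv * e₁ + Kr * e₂)))
    (hΔ : 1 + D' * Gc * Kr + D' * Gc * Gv * (Kv + η * Kr) ≠ 0) :
    e₁ = ((1 + D' * Gc * Kr) / (1 + D' * Gc * Kr + D' * Gc * Gv * (Kv + η * Kr))) * Vref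
      - (D' * Gc * Gv * Kr / (1 + D' * Gc * Kr + D' * Gc * Gv * (Kv + η * Kr))) * (iref - iload)
      + (Gv / (1 + D' * Gc * Kr + D' * Gc * Gv * (Kv + η * Kr))) * iload := by
  rw [div_mul_eq_mul_div, div_mul_eq_mul_div, div_mul_eq_mul_div, ← sub_div, ← add_div, eq_div_iff hΔ]
  linear_combination (1 + D'*Gc*Kr) * (he₁ - hV) - Gv*D'*Gc*Kr * he₂
end

section
/- With the DC-limit setup, the closed-loop transfer function from i_ref to V, namely T_{i_ref V}(s) = D′G̃_c(s)G_v(s)K_r(s)/Δ(s), tends to K_r(0)/(K_v(0) + ηK_r(0)) as s → 0 through nonzero complex values; in particular its DC gain has modulus |K_r(0)|/|K_v(0) + ηK_r(0)|. -/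
open Topology Filter

/-- The closed-loop transfer function from `i_ref` to `V` has DC gain
`K_r(0)/(K_v(0) + η K_r(0))`, whose modulus is `|K_r(0)|/|K_v(0) + η K_r(0)|`. -/
theorem Tirefv_dc_gain (C D' η ωt ω₀ ζ₁ ζ₂ : ℝ) (hC : 0 < C) (hD' : 0 < D')
    (hωt : 0 < ωt) (hω₀ : 0 < ω₀) (hζ₁ : 0 < ζ₁) (hζ₂ : 0 < ζ₂)
    (Kv Kr : ℂ → ℂ) (hKv : ContinuousAt Kv 0) (hKr : ContinuousAt Kr 0)
    (hK : Kv 0 + (η : ℂ) * Kr 0 ≠ 0) :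
    Filter.Tendsto (fun s : ℂ =>
      let Gc : ℂ := ((ωt : ℂ) / (s + (ωt : ℂ))) *
        ((s ^ 2 + 2 * (ζ₁ : ℂ) * (ω₀ : ℂ) * s + (ω₀ : ℂ) ^ 2) /
          (s ^ 2 + 2 * (ζ₂ : ℂ) * (ω₀ : ℂ) * s + (ω₀ : ℂ) ^ 2))
      let Gv : ℂ := 1 / (s * (C : ℂ))
      let Δ : ℂ := 1 + (D' : ℂ) * Gc * Kr s + (D' : ℂ) * Gc * Gv * (Kv s + (η : ℂ) * Kr s)
      (D' : ℂ) * Gc * Gv * Kr s / Δ)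
      (𝓝[≠] (0 : ℂ)) (𝓝 (Kr 0 / (Kv 0 + (η : ℂ) * Kr 0))) ∧
    ‖Kr 0 / (Kv 0 + (η : ℂ) * Kr 0)‖
      = ‖Kr 0‖ / ‖Kv 0 + (η : ℂ) * Kr 0‖ := by
  have hD0 : (D' : ℂ) ≠ 0 := Complex.ofReal_ne_zero.mpr hD'.ne'
  have hC0 : (C : ℂ) ≠ 0 := Complex.ofReal_ne_zero.mpr hC.ne'
  have hωt0 : (ωt : ℂ) ≠ 0 := Complex.ofReal_ne_zero.mpr hωt.ne'
  have hω₀0 : ((ω₀ : ℂ)) ^ 2 ≠ 0 := pow_ne_zero _ (Complex.ofReal_ne_zero.mpr hω₀.ne')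
  set Gc : ℂ → ℂ := fun s => ((ωt : ℂ) / (s + (ωt : ℂ))) *
      ((s ^ 2 + 2 * (ζ₁ : ℂ) * (ω₀ : ℂ) * s + (ω₀ : ℂ) ^ 2) /
        (s ^ 2 + 2 * (ζ₂ : ℂ) * (ω₀ : ℂ) * s + (ω₀ : ℂ) ^ 2)) with hGcdef
  have hGc : Tendsto Gc (𝓝 0) (𝓝 1) := by
    have h1 : Tendsto (fun s : ℂ => s + (ωt : ℂ)) (𝓝 0) (𝓝 (ωt : ℂ)) := by
      simpa using ((by fun_prop : Continuous (fun s : ℂ => s + (ωt : ℂ)))).tendsto (0 : ℂ)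
    have h2 : Tendsto (fun s : ℂ => s ^ 2 + 2 * (ζ₁ : ℂ) * (ω₀ : ℂ) * s + (ω₀ : ℂ) ^ 2)
        (𝓝 0) (𝓝 ((ω₀ : ℂ) ^ 2)) := by
      have : Continuous (fun s : ℂ => s ^ 2 + 2 * (ζ₁ : ℂ) * (ω₀ : ℂ) * s + (ω₀ : ℂ) ^ 2) := by
        fun_prop
      simpa using this.tendsto (0 : ℂ)
    have h3 : Tendsto (fun s : ℂ => s ^ 2 + 2 * (ζ₂ : ℂ) * (ω₀ : ℂ) * s + (ω₀ : ℂ) ^ 2)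
        (𝓝 0) (𝓝 ((ω₀ : ℂ) ^ 2)) := by
      have : Continuous (fun s : ℂ => s ^ 2 + 2 * (ζ₂ : ℂ) * (ω₀ : ℂ) * s + (ω₀ : ℂ) ^ 2) := by
        fun_prop
      simpa using this.tendsto (0 : ℂ)
    have := ((tendsto_const_nhds : Tendsto (fun _ : ℂ => (ωt : ℂ)) (𝓝 0) _).div h1 hωt0).mul
      (h2.div h3 hω₀0)
    simpa [div_self hωt0, div_self hω₀0] using this
  -- the modified (pole-cancelled) representation
  set g : ℂ → ℂ := fun s =>
    ((D' : ℂ) * Gc s * Kr s) /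
      (s * (C : ℂ) * (1 + (D' : ℂ) * Gc s * Kr s) +
        (D' : ℂ) * Gc s * (Kv s + (η : ℂ) * Kr s)) with hgdef
  have hden0 : (D' : ℂ) * (Kv 0 + (η : ℂ) * Kr 0) ≠ 0 := mul_ne_zero hD0 hK
  have hKr' : Tendsto Kr (𝓝 0) (𝓝 (Kr 0)) := hKr
  have hKv' : Tendsto Kv (𝓝 0) (𝓝 (Kv 0)) := hKv
  have hGcmul : Tendsto (fun s : ℂ => (D' : ℂ) * Gc s) (𝓝 0) (𝓝 ((D' : ℂ) * 1)) :=
    hGc.const_mul _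
  have hnum : Tendsto (fun s : ℂ => (D' : ℂ) * Gc s * Kr s) (𝓝 0)
      (𝓝 ((D' : ℂ) * Kr 0)) := by
    have := hGcmul.mul hKr'
    simpa using this
  have hden : Tendsto (fun s : ℂ => s * (C : ℂ) * (1 + (D' : ℂ) * Gc s * Kr s) +
      (D' : ℂ) * Gc s * (Kv s + (η : ℂ) * Kr s)) (𝓝 0)
      (𝓝 ((D' : ℂ) * (Kv 0 + (η : ℂ) * Kr 0))) := by
    have ha : Tendsto (fun s : ℂ => s * (C : ℂ) * (1 + (D' : ℂ) * Gc s * Kr s)) (𝓝 0)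
        (𝓝 0) := by
      have hsc : Tendsto (fun s : ℂ => s * (C : ℂ)) (𝓝 0) (𝓝 (0 * (C : ℂ))) :=
        (continuous_id.mul (continuous_const : Continuous fun _ : ℂ => (C : ℂ))).tendsto (0 : ℂ)
      have := hsc.mul ((hGcmul.mul hKr').const_add 1)
      simpa using this
    have hb : Tendsto (fun s : ℂ => (D' : ℂ) * Gc s * (Kv s + (η : ℂ) * Kr s)) (𝓝 0)
        (𝓝 ((D' : ℂ) * (Kv 0 + (η : ℂ) * Kr 0))) := by
      have := hGcmul.mul (hKv'.add (hKr'.const_mul (η : ℂ)))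
      simpa using this
    simpa using ha.add hb
  have hg : Tendsto g (𝓝 0) (𝓝 (Kr 0 / (Kv 0 + (η : ℂ) * Kr 0))) := by
    have := hnum.div hden hden0
    rw [mul_div_mul_left _ _ hD0] at this
    exact this
  constructor
  · refine Tendsto.congr' ?_ (hg.mono_left nhdsWithin_le_nhds)
    filter_upwards [self_mem_nhdsWithin] with s hs
    have hs' : s ≠ 0 := hs
    have hsC : s * (C : ℂ) ≠ 0 := mul_ne_zero hs' hC0
    have key : ∀ a b : ℂ, a / b = (s * (C : ℂ) * a) / (s * (C : ℂ) * b) :=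
      fun a b => (mul_div_mul_left a b hsC).symm
    show ((D' : ℂ) * Gc s * Kr s) /
        (s * (C : ℂ) * (1 + (D' : ℂ) * Gc s * Kr s) +
          (D' : ℂ) * Gc s * (Kv s + (η : ℂ) * Kr s)) =
      ((D' : ℂ) * Gc s * (1 / (s * (C : ℂ))) * Kr s) /
        (1 + (D' : ℂ) * Gc s * Kr s +
          (D' : ℂ) * Gc s * (1 / (s * (C : ℂ))) * (Kv s + (η : ℂ) * Kr s))
    rw [key ((D' : ℂ) * Gc s * (1 / (s * (C : ℂ))) * Kr s)]
    congr 1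
    · field_simp
    · field_simp
  · exact norm_div _ _
end

section
/- With the DC-limit setup, the closed-loop transfer function from the load-current disturbance i_load to V, namely (G_vS)(s) = G_v(s)/Δ(s), tends to 1/(D′(K_v(0) + ηK_r(0))) as s → 0 through nonzero complex values; in particular its DC gain has modulus 1/(D′·|K_v(0) + ηK_r(0)|). -/
open Topology Filter

/-- The closed-loop transfer function from the load current disturbance to `V`
has DC gain `1/(D'(K_v(0) + η K_r(0)))`, of modulus `1/(D' |K_v(0) + η K_r(0)|)`. -/
theorem GvS_dc_gain (C D' η ωt ω₀ ζ₁ ζ₂ : ℝ) (hC : 0 < C) (hD' : 0 < D')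
    (hωt : 0 < ωt) (hω₀ : 0 < ω₀) (hζ₁ : 0 < ζ₁) (hζ₂ : 0 < ζ₂)
    (Kv Kr : ℂ → ℂ) (hKv : ContinuousAt Kv 0) (hKr : ContinuousAt Kr 0)
    (hK : Kv 0 + (η : ℂ) * Kr 0 ≠ 0) :
    Filter.Tendsto (fun s : ℂ =>
      let Gc : ℂ := ((ωt : ℂ) / (s + (ωt : ℂ))) *
        ((s ^ 2 + 2 * (ζ₁ : ℂ) * (ω₀ : ℂ) * s + (ω₀ : ℂ) ^ 2) /
          (s ^ 2 + 2 * (ζ₂ : ℂ) * (ω₀ : ℂ) * s + (ω₀ : ℂ) ^ 2))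
      let Gv : ℂ := 1 / (s * (C : ℂ))
      let Δ : ℂ := 1 + (D' : ℂ) * Gc * Kr s + (D' : ℂ) * Gc * Gv * (Kv s + (η : ℂ) * Kr s)
      Gv / Δ)
      (𝓝[≠] (0 : ℂ)) (𝓝 (1 / ((D' : ℂ) * (Kv 0 + (η : ℂ) * Kr 0)))) ∧
    ‖(1 / ((D' : ℂ) * (Kv 0 + (η : ℂ) * Kr 0)))‖
      = 1 / (D' * ‖(Kv 0 + (η : ℂ) * Kr 0)‖) := by
  have hCne : (C : ℂ) ≠ 0 := by exact_mod_cast hC.ne'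
  have hD'ne : (D' : ℂ) ≠ 0 := by exact_mod_cast hD'.ne'
  have hωtne : (ωt : ℂ) ≠ 0 := by exact_mod_cast hωt.ne'
  have hω₀ne : (ω₀ : ℂ) ≠ 0 := by exact_mod_cast hω₀.ne'
  set Gc : ℂ → ℂ := fun s => ((ωt : ℂ) / (s + (ωt : ℂ))) *
        ((s ^ 2 + 2 * (ζ₁ : ℂ) * (ω₀ : ℂ) * s + (ω₀ : ℂ) ^ 2) /
          (s ^ 2 + 2 * (ζ₂ : ℂ) * (ω₀ : ℂ) * s + (ω₀ : ℂ) ^ 2)) with hGc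
  have hGc0 : Gc 0 = 1 := by
    simp [hGc]
    field_simp
  have hGcc : ContinuousAt Gc 0 := by
    apply ContinuousAt.mul
    · apply ContinuousAt.div continuousAt_const (by fun_prop)
      simpa using hωtne
    · apply ContinuousAt.div (by fun_prop) (by fun_prop)
      simpa using pow_ne_zero 2 hω₀ne
  set f : ℂ → ℂ := fun s => s * (C : ℂ) * (1 + (D' : ℂ) * Gc s * Kr s)
      + (D' : ℂ) * Gc s * (Kv s + (η : ℂ) * Kr s) with hf
  have hfc : ContinuousAt f 0 := by
    apply ContinuousAt.add
    · fun_prop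
    · fun_prop
  have hf0 : f 0 = (D' : ℂ) * (Kv 0 + (η : ℂ) * Kr 0) := by
    simp [hf, hGc0]
  have hfl : Tendsto f (𝓝[≠] (0 : ℂ)) (𝓝 ((D' : ℂ) * (Kv 0 + (η : ℂ) * Kr 0))) := by
    rw [← hf0]
    exact hfc.continuousWithinAt.tendsto
  have hL : (D' : ℂ) * (Kv 0 + (η : ℂ) * Kr 0) ≠ 0 := mul_ne_zero hD'ne hK
  constructor
  · have h1 : Tendsto (fun s => 1 / f s) (𝓝[≠] (0 : ℂ))
        (𝓝 (1 / ((D' : ℂ) * (Kv 0 + (η : ℂ) * Kr 0)))) := by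
      simp only [one_div]
      exact hfl.inv₀ hL
    refine h1.congr' ?_
    filter_upwards [self_mem_nhdsWithin] with s hs
    have hs : s ≠ 0 := hs
    have hsC : s * (C : ℂ) ≠ 0 := mul_ne_zero hs hCne
    show 1 / f s = (1 / (s * (C : ℂ))) / (1 + (D' : ℂ) * Gc s * Kr s
      + (D' : ℂ) * Gc s * (1 / (s * (C : ℂ))) * (Kv s + (η : ℂ) * Kr s))
    rw [div_div]
    congr 1
    simp only [hf]
    field_simp
  · rw [norm_div, norm_one, norm_mul, Complex.norm_real, Real.norm_of_nonneg hD'.le]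
end

section
/- (Theorem 1, Part 1: System Equivalence.) In the multi-converter closed loop with m ≥ 1 converters whose sharing scalars satisfy γ₁ + ⋯ + γ_m = 1, suppose additionally e₁ = V_ref − V and V = G_v(−i_load + Σ_{k=1}^m D′G̃_c((1/m)K_v e₁ + K_r e₂^(k))), and that Δ := 1 + D′G̃_cK_r + D′G̃_cG_v(K_v + ηK_r) ≠ 0. Then the DC-link voltage of the multi-converter system equals the single-converter expression: V = [D′G̃_cG_v(K_v + ηK_r)/Δ]·V_ref + [D′G̃_cG_vK_r/Δ]·(i_ref − i_load) − [G_v/Δ]·i_load; hence the maps from (V_ref, i_ref, i_load) to V are identical for the multi-converter system and the equivalent single-converter system. -/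
/-- Theorem 1, Part 1 (System Equivalence): the DC-link voltage of the
multi-converter system equals the single-converter closed-loop expression. -/
theorem system_equivalence (m : ℕ) (hm : 1 ≤ m)
    (D' η Gv Gc Kv Kr Vref iref iload V e₁ : ℂ) (γ e₂k : Fin m → ℂ)
    (hγ : ∑ k, γ k = 1)
    (he₁ : e₁ = Vref - V)
    (he₂k : ∀ k, e₂k k = γ k * (iref + η * e₁)
      - D' * Gc * ((1 / (m : ℂ)) * Kv * e₁ + Kr * e₂k k))
    (hV : V = Gv * (-iload + ∑ k, D' * Gc * ((1 / (m : ℂ)) * Kv * e₁ + Kr * e₂k k)))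
    (hΔ : 1 + D' * Gc * Kr + D' * Gc * Gv * (Kv + η * Kr) ≠ 0) :
    V = (D' * Gc * Gv * (Kv + η * Kr) / (1 + D' * Gc * Kr + D' * Gc * Gv * (Kv + η * Kr))) * Vref
      + (D' * Gc * Gv * Kr / (1 + D' * Gc * Kr + D' * Gc * Gv * (Kv + η * Kr))) * (iref - iload)
      - (Gv / (1 + D' * Gc * Kr + D' * Gc * Gv * (Kv + η * Kr))) * iload := by
  have hm0 : (m : ℂ) ≠ 0 := Nat.cast_ne_zero.mpr (by omega)
  set S := ∑ k, e₂k k with hSdef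
  have hS : S = (iref + η * e₁)
      - (m : ℂ) * (D' * Gc * ((1 / (m : ℂ)) * Kv * e₁)) - D' * Gc * Kr * S := by
    calc S = ∑ k, (γ k * (iref + η * e₁)
        - D' * Gc * ((1 / (m : ℂ)) * Kv * e₁ + Kr * e₂k k)) :=
          Finset.sum_congr rfl fun k _ => he₂k k
      _ = (∑ k, γ k) * (iref + η * e₁)
          - (m : ℂ) * (D' * Gc * ((1 / (m : ℂ)) * Kv * e₁)) - D' * Gc * Kr * S := by
        rw [hSdef, Finset.mul_sum]
        simp [Finset.sum_sub_distrib, Finset.sum_add_distrib, ← Finset.sum_mul,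
          Finset.mul_sum, mul_add]
        ring
      _ = (iref + η * e₁)
          - (m : ℂ) * (D' * Gc * ((1 / (m : ℂ)) * Kv * e₁)) - D' * Gc * Kr * S := by
        rw [hγ, one_mul]
  have hV' : V = Gv * (-iload + ((m : ℂ) * (D' * Gc * ((1 / (m : ℂ)) * Kv * e₁))
      + D' * Gc * Kr * S)) := by
    rw [hV, hSdef, Finset.mul_sum]
    congr 1
    simp [Finset.sum_add_distrib, Finset.mul_sum, mul_add]
    ring
  field_simp
  field_simp at hS hV'
  linear_combination (1 + D' * Gc * Kr) * hV'
    + Gv * D' * Gc * Kr * hS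
    + Gv * D' * Gc * (Kv + η * Kr) * he₁
end

section
/- In the multi-converter closed loop, if 1 + D′G̃_cK_r ≠ 0 and γ_k, γ_l ≠ 0, then the difference of the scaled output currents of converters k and l is exactly i_k/γ_k − i_l/γ_l = T̃₂·(1/γ_k − 1/γ_l)·e₁, where T̃₂ := D′G̃_cK_v/(m(1 + D′G̃_cK_r)); in particular the i_ref-dependent and droop-dependent terms cancel in the difference. -/
/-- The difference of scaled output currents of converters `k` and `l`:
the `i_ref`- and droop-dependent terms cancel exactly. -/
theorem scaled_current_difference (m : ℕ) (hm : 1 ≤ m)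
    (D' η Gc Kv Kr e₁ iref : ℂ) (γ e₂k : Fin m → ℂ)
    (he₂k : ∀ k, e₂k k = γ k * (iref + η * e₁)
      - D' * Gc * ((1 / (m : ℂ)) * Kv * e₁ + Kr * e₂k k))
    (hden : 1 + D' * Gc * Kr ≠ 0) (k l : Fin m)
    (hγk : γ k ≠ 0) (hγl : γ l ≠ 0)
    (ik il : ℂ)
    (hik : ik = D' * Gc * ((1 / (m : ℂ)) * Kv * e₁ + Kr * e₂k k))
    (hil : il = D' * Gc * ((1 / (m : ℂ)) * Kv * e₁ + Kr * e₂k l)) :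
    ik / γ k - il / γ l
      = (D' * Gc * Kv / ((m : ℂ) * (1 + D' * Gc * Kr))) * (1 / γ k - 1 / γ l) * e₁ := by
  have hm0 : (m : ℂ) ≠ 0 := Nat.cast_ne_zero.mpr (by omega)
  have hsolve : ∀ j, e₂k j = (γ j * (iref + η * e₁) - D' * Gc * ((1 / (m : ℂ)) * Kv * e₁))
      / (1 + D' * Gc * Kr) := by
    intro j
    rw [eq_div_iff hden]
    linear_combination he₂k j
  subst hik hil
  rw [hsolve k, hsolve l]
  set s := 1 + D' * Gc * Kr with hs
  clear_value s
  field_simp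
  linear_combination (D' * Gc * Kv * e₁ * (γ l - γ k)) * hs
end

section
/- (Theorem 1, Part 2: Power Sharing bound.) In the multi-converter closed loop, assume 1 + D′G̃_cK_r ≠ 0, the droop coefficient η is a nonnegative real number, and the sharing scalars γ_k, γ_l are positive reals. Then for any two converters k and l, |i_k/γ_k − i_l/γ_l| ≤ (η·|T̃₁| + |1/γ_k − 1/γ_l|·|T̃₂|)·|e₁|, where T̃₁ := D′G̃_cK_r/(1 + D′G̃_cK_r) and T̃₂ := D′G̃_cK_v/(m(1 + D′G̃_cK_r)). -/
/-- Theorem 1, Part 2 (Power Sharing bound): the difference of the scaled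
steady-state output currents of any two converters is bounded in terms of the
voltage tracking error. -/
theorem power_sharing_bound (m : ℕ) (hm : 1 ≤ m)
    (D' Gc Kv Kr e₁ iref : ℂ) (η : ℝ) (hη : 0 ≤ η) (γ : Fin m → ℝ) (e₂k : Fin m → ℂ)
    (he₂k : ∀ k, e₂k k = (γ k : ℂ) * (iref + (η : ℂ) * e₁)
      - D' * Gc * ((1 / (m : ℂ)) * Kv * e₁ + Kr * e₂k k))
    (hden : 1 + D' * Gc * Kr ≠ 0) (k l : Fin m)
    (hγk : 0 < γ k) (hγl : 0 < γ l)
    (ik il : ℂ)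
    (hik : ik = D' * Gc * ((1 / (m : ℂ)) * Kv * e₁ + Kr * e₂k k))
    (hil : il = D' * Gc * ((1 / (m : ℂ)) * Kv * e₁ + Kr * e₂k l)) :
    ‖ik / (γ k : ℂ) - il / (γ l : ℂ)‖
      ≤ (η * ‖D' * Gc * Kr / (1 + D' * Gc * Kr)‖
          + |1 / γ k - 1 / γ l| * ‖D' * Gc * Kv / ((m : ℂ) * (1 + D' * Gc * Kr))‖)
        * ‖e₁‖ := by
  have hm0 : (m : ℂ) ≠ 0 := by
    exact_mod_cast Nat.cast_ne_zero.mpr (by omega)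
  have hγk0 : (γ k : ℂ) ≠ 0 := by exact_mod_cast hγk.ne'
  have hγl0 : (γ l : ℂ) ≠ 0 := by exact_mod_cast hγl.ne'
  set A := 1 + D' * Gc * Kr with hA
  clear_value A
  have hk' : e₂k k = ((γ k : ℂ) * (iref + (η : ℂ) * e₁)
      - D' * Gc * ((1 / (m : ℂ)) * Kv * e₁)) / A := by
    rw [eq_div_iff hden]; linear_combination he₂k k + e₂k k * hA
  have hl' : e₂k l = ((γ l : ℂ) * (iref + (η : ℂ) * e₁)
      - D' * Gc * ((1 / (m : ℂ)) * Kv * e₁)) / A := by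
    rw [eq_div_iff hden]; linear_combination he₂k l + e₂k l * hA
  have hk3 : ik / (γ k : ℂ)
      = D' * Gc * Kr * (iref + (η : ℂ) * e₁) / A
        + ((γ k : ℂ))⁻¹ * (D' * Gc * Kv / ((m : ℂ) * A)) * e₁ := by
    rw [hik, hk']
    field_simp
    linear_combination D' * Gc * Kv * e₁ * hA
  have hl3 : il / (γ l : ℂ)
      = D' * Gc * Kr * (iref + (η : ℂ) * e₁) / A
        + ((γ l : ℂ))⁻¹ * (D' * Gc * Kv / ((m : ℂ) * A)) * e₁ := by
    rw [hil, hl']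
    field_simp
    linear_combination D' * Gc * Kv * e₁ * hA
  have heq : ik / (γ k : ℂ) - il / (γ l : ℂ)
      = (((1 / γ k - 1 / γ l : ℝ)) : ℂ)
        * (D' * Gc * Kv / ((m : ℂ) * A)) * e₁ := by
    rw [hk3, hl3]
    push_cast
    ring
  rw [heq, norm_mul, norm_mul, Complex.norm_real, Real.norm_eq_abs]
  have h1 : 0 ≤ η * ‖D' * Gc * Kr / A‖ :=
    mul_nonneg hη (norm_nonneg _)
  nlinarith [norm_nonneg e₁,
    norm_nonneg (D' * Gc * Kv / ((m : ℂ) * A)),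
    abs_nonneg (1 / γ k - 1 / γ l)]
end

section
/- (Theorem 1, Part 2: centralized steady-state error bound.) With the DC-limit setup, fix constants V_ref, i_ref ∈ ℂ and set i_load = i_ref (the centralized case, where the load current is measured and communicated). For s ≠ 0 define the tracking error e₁(s) = [(1 + D′G̃_c(s)K_r(s))/Δ(s)]·V_ref − [D′G̃_c(s)G_v(s)K_r(s)/Δ(s)]·(i_ref − i_load) + [G_v(s)/Δ(s)]·i_load. Then e₁(s) converges as s → 0 through nonzero values to a limit e₁(j0) satisfying |e₁(j0)| ≤ |i_ref|/(D′·|K_v(0) + ηK_r(0)|). -/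
open Topology Filter

noncomputable def myGc (ωt ω₀ ζ₁ ζ₂ : ℝ) (s : ℂ) : ℂ :=
  ((ωt : ℂ) / (s + (ωt : ℂ))) *
    ((s ^ 2 + 2 * (ζ₁ : ℂ) * (ω₀ : ℂ) * s + (ω₀ : ℂ) ^ 2) /
      (s ^ 2 + 2 * (ζ₂ : ℂ) * (ω₀ : ℂ) * s + (ω₀ : ℂ) ^ 2))

lemma aux_alg (sC g kr kv D e V i : ℂ) (hsC : sC ≠ 0) :
    (sC * (1 + D * g * kr)) / (sC + D * g * kr * sC + D * g * (kv + e * kr)) * V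
      + i / (sC + D * g * kr * sC + D * g * (kv + e * kr))
    = ((1 + D * g * kr) / (1 + D * g * kr + D * g * (1 / sC) * (kv + e * kr))) * V
      - (D * g * (1 / sC) * kr / (1 + D * g * kr + D * g * (1 / sC) * (kv + e * kr))) * (i - i)
      + ((1 / sC) / (1 + D * g * kr + D * g * (1 / sC) * (kv + e * kr))) * i := by
  set Δ : ℂ := 1 + D * g * kr + D * g * (1 / sC) * (kv + e * kr) with hΔdef
  have hΔ : sC * Δ = sC + D * g * kr * sC + D * g * (kv + e * kr) := by
    rw [hΔdef]; field_simp
  rw [← hΔ, mul_div_mul_left _ _ hsC, sub_self, mul_zero, sub_zero, div_div,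
    one_div_mul_eq_div]

set_option maxHeartbeats 2000000
/-- Theorem 1, Part 2 (centralized steady-state error bound): when the load
current is measured (`i_load = i_ref`), the steady-state voltage tracking
error is bounded by `|i_ref| / (D' |K_v(0) + η K_r(0)|)`. -/
theorem centralized_error_bound (C D' η ωt ω₀ ζ₁ ζ₂ : ℝ) (hC : 0 < C) (hD' : 0 < D')
    (hωt : 0 < ωt) (hω₀ : 0 < ω₀) (hζ₁ : 0 < ζ₁) (hζ₂ : 0 < ζ₂)
    (Kv Kr : ℂ → ℂ) (hKv : ContinuousAt Kv 0) (hKr : ContinuousAt Kr 0)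
    (hK : Kv 0 + (η : ℂ) * Kr 0 ≠ 0)
    (Vref iref iload : ℂ) (hcentral : iload = iref) :
    ∃ e₁0 : ℂ,
      Filter.Tendsto (fun s : ℂ =>
        let Gc : ℂ := ((ωt : ℂ) / (s + (ωt : ℂ))) *
          ((s ^ 2 + 2 * (ζ₁ : ℂ) * (ω₀ : ℂ) * s + (ω₀ : ℂ) ^ 2) /
            (s ^ 2 + 2 * (ζ₂ : ℂ) * (ω₀ : ℂ) * s + (ω₀ : ℂ) ^ 2))
        let Gv : ℂ := 1 / (s * (C : ℂ))
        let Δ : ℂ := 1 + (D' : ℂ) * Gc * Kr s + (D' : ℂ) * Gc * Gv * (Kv s + (η : ℂ) * Kr s)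
        ((1 + (D' : ℂ) * Gc * Kr s) / Δ) * Vref
          - ((D' : ℂ) * Gc * Gv * Kr s / Δ) * (iref - iload)
          + (Gv / Δ) * iload)
        (𝓝[≠] (0 : ℂ)) (𝓝 e₁0) ∧
      ‖e₁0‖ ≤ ‖iref‖ / (D' * ‖Kv 0 + (η : ℂ) * Kr 0‖) := by
  have hDne : (D' : ℂ) ≠ 0 := Complex.ofReal_ne_zero.mpr hD'.ne'
  have hCne : (C : ℂ) ≠ 0 := Complex.ofReal_ne_zero.mpr hC.ne'
  set K0 : ℂ := Kv 0 + (η : ℂ) * Kr 0 with hK0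
  have hGc : ContinuousAt (myGc ωt ω₀ ζ₁ ζ₂) 0 := by
    apply ContinuousAt.mul
    · exact ContinuousAt.div continuousAt_const (by fun_prop)
        (by simpa using Complex.ofReal_ne_zero.mpr hωt.ne')
    · exact ContinuousAt.div (by fun_prop) (by fun_prop)
        (by simpa using pow_ne_zero 2 (Complex.ofReal_ne_zero.mpr hω₀.ne'))
  have hGc0 : myGc ωt ω₀ ζ₁ ζ₂ 0 = 1 := by
    simp [myGc, div_self, Complex.ofReal_ne_zero.mpr hωt.ne',
      pow_ne_zero 2 (Complex.ofReal_ne_zero.mpr hω₀.ne')]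
  set Den : ℂ → ℂ := fun s =>
    s * (C : ℂ) + (D' : ℂ) * myGc ωt ω₀ ζ₁ ζ₂ s * Kr s * (s * (C : ℂ)) +
      (D' : ℂ) * myGc ωt ω₀ ζ₁ ζ₂ s * (Kv s + (η : ℂ) * Kr s) with hDenDef
  have hDen : ContinuousAt Den 0 := by fun_prop
  have hDen0 : Den 0 = (D' : ℂ) * K0 := by simp [hDenDef, hGc0, hK0]
  have hDen0ne : Den 0 ≠ 0 := by rw [hDen0]; exact mul_ne_zero hDne hK
  set F : ℂ → ℂ := fun s =>
    (s * (C : ℂ) * (1 + (D' : ℂ) * myGc ωt ω₀ ζ₁ ζ₂ s * Kr s)) / Den s * Vref +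
      iref / Den s with hFdef
  have hNum : ContinuousAt (fun s : ℂ =>
      s * (C : ℂ) * (1 + (D' : ℂ) * myGc ωt ω₀ ζ₁ ζ₂ s * Kr s)) 0 := by fun_prop
  have hF : Tendsto F (𝓝 0) (𝓝 (iref / ((D' : ℂ) * K0))) := by
    have h : ContinuousAt F 0 := ((hNum.div hDen hDen0ne).mul (continuousAt_const (y := Vref))).add
      ((continuousAt_const (y := iref)).div hDen hDen0ne)
    have hF0 : F 0 = iref / ((D' : ℂ) * K0) := by
      simp [hFdef, hDen0]
    have h2 := h.tendsto
    rwa [hF0] at h2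
  refine ⟨iref / ((D' : ℂ) * K0), ?_, ?_⟩
  · refine Tendsto.congr' ?_ (hF.mono_left nhdsWithin_le_nhds)
    filter_upwards [self_mem_nhdsWithin] with s hs
    have hs0 : s ≠ 0 := hs
    have hsC : s * (C : ℂ) ≠ 0 := mul_ne_zero hs0 hCne
    simp only [hFdef, hDenDef, myGc, hcentral]
    exact aux_alg (s * (C : ℂ)) (((ωt : ℂ) / (s + (ωt : ℂ))) *
      ((s ^ 2 + 2 * (ζ₁ : ℂ) * (ω₀ : ℂ) * s + (ω₀ : ℂ) ^ 2) /
        (s ^ 2 + 2 * (ζ₂ : ℂ) * (ω₀ : ℂ) * s + (ω₀ : ℂ) ^ 2))) (Kr s) (Kv s) (D' : ℂ) (η : ℂ)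
      Vref iref hsC
  · rw [norm_div, norm_mul, Complex.norm_real, Real.norm_eq_abs, abs_of_pos hD']
end

section
/- (Theorem 1, Part 2: decentralized steady-state error bound.) With the DC-limit setup and additionally 0 < D′ ≤ 1, fix constants V_ref, i_ref, i_load ∈ ℂ with i_ref possibly different from i_load (the decentralized case, where the load current is not measured). For s ≠ 0 define the tracking error e₁(s) = [(1 + D′G̃_c(s)K_r(s))/Δ(s)]·V_ref − [D′G̃_c(s)G_v(s)K_r(s)/Δ(s)]·(i_ref − i_load) + [G_v(s)/Δ(s)]·i_load. Then e₁(s) converges as s → 0 through nonzero values to a limit e₁(j0) satisfying |e₁(j0)| ≤ (|K_r(0)|/(D′·|K_v(0) + ηK_r(0)|))·|i_ref| + ((D′·|K_r(0)| + 1)/(D′·|K_v(0) + ηK_r(0)|))·|i_load|. -/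
open Topology Filter

private lemma dec_key (s C D c kr kv kη Vref iref iload : ℂ) (hs : s * C ≠ 0) :
    (s * C * (1 + D * c * kr) * Vref - D * c * kr * (iref - iload) + iload) /
      (s * C + s * C * (D * c * kr) + D * c * (kv + kη * kr)) =
    (1 + D * c * kr) / (1 + D * c * kr + D * c * (1 / (s * C)) * (kv + kη * kr)) * Vref
      - D * c * (1 / (s * C)) * kr /
          (1 + D * c * kr + D * c * (1 / (s * C)) * (kv + kη * kr)) * (iref - iload)
      + 1 / (s * C) / (1 + D * c * kr + D * c * (1 / (s * C)) * (kv + kη * kr)) * iload := by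
  have hs1 : s ≠ 0 := left_ne_zero_of_mul hs
  have hC1 : C ≠ 0 := right_ne_zero_of_mul hs
  set Δ : ℂ := 1 + D * c * kr + D * c * (1 / (s * C)) * (kv + kη * kr) with hΔ
  have hDdΔ : s * C + s * C * (D * c * kr) + D * c * (kv + kη * kr) = s * C * Δ := by
    rw [hΔ]; field_simp
  rw [hDdΔ]
  by_cases hΔ0 : Δ = 0
  · rw [hΔ0, mul_zero, div_zero]
    simp
  · rw [div_eq_iff (mul_ne_zero hs hΔ0)]
    field_simp

/-- Theorem 1, Part 2 (decentralized steady-state error bound): when the load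
current is not measured, the steady-state voltage tracking error is bounded in
terms of `|i_ref|` and `|i_load|`. -/
theorem decentralized_error_bound (C D' η ωt ω₀ ζ₁ ζ₂ : ℝ) (hC : 0 < C) (hD' : 0 < D')
    (hD'le : D' ≤ 1)
    (hωt : 0 < ωt) (hω₀ : 0 < ω₀) (hζ₁ : 0 < ζ₁) (hζ₂ : 0 < ζ₂)
    (Kv Kr : ℂ → ℂ) (hKv : ContinuousAt Kv 0) (hKr : ContinuousAt Kr 0)
    (hK : Kv 0 + (η : ℂ) * Kr 0 ≠ 0)
    (Vref iref iload : ℂ) :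
    ∃ e₁0 : ℂ,
      Filter.Tendsto (fun s : ℂ =>
        let Gc : ℂ := ((ωt : ℂ) / (s + (ωt : ℂ))) *
          ((s ^ 2 + 2 * (ζ₁ : ℂ) * (ω₀ : ℂ) * s + (ω₀ : ℂ) ^ 2) /
            (s ^ 2 + 2 * (ζ₂ : ℂ) * (ω₀ : ℂ) * s + (ω₀ : ℂ) ^ 2))
        let Gv : ℂ := 1 / (s * (C : ℂ))
        let Δ : ℂ := 1 + (D' : ℂ) * Gc * Kr s + (D' : ℂ) * Gc * Gv * (Kv s + (η : ℂ) * Kr s)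
        ((1 + (D' : ℂ) * Gc * Kr s) / Δ) * Vref
          - ((D' : ℂ) * Gc * Gv * Kr s / Δ) * (iref - iload)
          + (Gv / Δ) * iload)
        (𝓝[≠] (0 : ℂ)) (𝓝 e₁0) ∧
      ‖e₁0‖
        ≤ (‖Kr 0‖ / (D' * ‖Kv 0 + (η : ℂ) * Kr 0‖)) * ‖iref‖
          + ((D' * ‖Kr 0‖ + 1) / (D' * ‖Kv 0 + (η : ℂ) * Kr 0‖))
            * ‖iload‖ := by
  have hC' : (C : ℂ) ≠ 0 := by exact_mod_cast hC.ne'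
  have hD0 : (D' : ℂ) ≠ 0 := by exact_mod_cast hD'.ne'
  have hωt' : (ωt : ℂ) ≠ 0 := by exact_mod_cast hωt.ne'
  have hω₀' : (ω₀ : ℂ) ≠ 0 := by exact_mod_cast hω₀.ne'
  set GcF : ℂ → ℂ := fun s => ((ωt : ℂ) / (s + (ωt : ℂ))) *
      ((s ^ 2 + 2 * (ζ₁ : ℂ) * (ω₀ : ℂ) * s + (ω₀ : ℂ) ^ 2) /
        (s ^ 2 + 2 * (ζ₂ : ℂ) * (ω₀ : ℂ) * s + (ω₀ : ℂ) ^ 2)) with hGcF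
  have hGc0 : GcF 0 = 1 := by
    simp only [hGcF]
    rw [show ((0:ℂ) + ωt) = ωt by ring]
    field_simp
    ring
  have hGcCont : ContinuousAt GcF 0 := by
    apply ContinuousAt.mul
    · exact ContinuousAt.div continuousAt_const (by fun_prop) (by simpa using hωt')
    · exact ContinuousAt.div (by fun_prop) (by fun_prop)
        (by simpa using pow_ne_zero 2 hω₀')
  set N : ℂ → ℂ := fun s => s * C * (1 + (D':ℂ) * GcF s * Kr s) * Vref
      - (D':ℂ) * GcF s * Kr s * (iref - iload) + iload with hN
  set Dd : ℂ → ℂ := fun s => s * C + s * C * ((D':ℂ) * GcF s * Kr s)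
      + (D':ℂ) * GcF s * (Kv s + (η:ℂ) * Kr s) with hDd
  have hDd0 : Dd 0 = (D':ℂ) * (Kv 0 + (η:ℂ) * Kr 0) := by
    simp [hDd, hGc0]
  have hDd0ne : Dd 0 ≠ 0 := by
    rw [hDd0]; exact mul_ne_zero hD0 hK
  have hNcont : ContinuousAt N 0 := by fun_prop
  have hDcont : ContinuousAt Dd 0 := by fun_prop
  refine ⟨N 0 / Dd 0, ?_, ?_⟩
  · have hT : Filter.Tendsto (fun s => N s / Dd s) (𝓝[≠] (0:ℂ)) (𝓝 (N 0 / Dd 0)) :=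
      ((hNcont.div hDcont hDd0ne).tendsto).mono_left nhdsWithin_le_nhds
    refine hT.congr' ?_
    filter_upwards [self_mem_nhdsWithin] with s hs
    have hs0 : s ≠ 0 := hs
    have hsC : s * (C:ℂ) ≠ 0 := mul_ne_zero hs0 hC'
    simp only
    exact dec_key s C D' (GcF s) (Kr s) (Kv s) η Vref iref iload hsC
  · have hN0 : N 0 = iload - (D':ℂ) * Kr 0 * (iref - iload) := by
      simp [hN, hGc0]; ring
    rw [hN0, hDd0, norm_div, norm_mul, Complex.norm_real, Real.norm_eq_abs, abs_of_pos hD']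
    have hKpos : 0 < ‖Kv 0 + (η : ℂ) * Kr 0‖ := norm_pos_iff.mpr hK
    rw [div_mul_eq_mul_div, div_mul_eq_mul_div, ← add_div,
      div_le_div_iff₀ (by positivity) (by positivity)]
    have t1 : ‖iload - (D':ℂ) * Kr 0 * (iref - iload)‖
        ≤ ‖iload‖ + D' * ‖Kr 0‖ * ‖iref - iload‖ := by
      calc ‖iload - (D':ℂ) * Kr 0 * (iref - iload)‖
          ≤ ‖iload‖ + ‖(D':ℂ) * Kr 0 * (iref - iload)‖ :=
            norm_sub_le _ _
        _ = ‖iload‖ + D' * ‖Kr 0‖ * ‖iref - iload‖ := by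
            rw [norm_mul, norm_mul, Complex.norm_real, Real.norm_eq_abs, abs_of_pos hD']
    have t2 : ‖iref - iload‖ ≤ ‖iref‖ + ‖iload‖ :=
      norm_sub_le _ _
    have hrefnn : 0 ≤ ‖iref‖ := norm_nonneg _
    have hloadnn : 0 ≤ ‖iload‖ := norm_nonneg _
    have hkrnn : 0 ≤ ‖Kr 0‖ := norm_nonneg _
    nlinarith [mul_le_mul_of_nonneg_left t2 (by positivity : (0:ℝ) ≤ D' * ‖Kr 0‖),
      mul_le_mul_of_nonneg_right hD'le (mul_nonneg hkrnn hrefnn),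
      mul_pos hD' hKpos, mul_le_mul_of_nonneg_right t1 hKpos.le]
end
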